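/- arXiv:1606.08886 — 7 statements merged into one kernel-verified Lean document; each statement's English description precedes it below -/
import Mathlib

section
/- Let h be a holomorphic function on a connected open set Ω ⊆ ℂ, twice complex differentiable, with h and h' nowhere zero on Ω. If there exists a real-valued function μ : Ω → ℝ such that conj(h''(z)) · h'(z)² = μ(z) · h(z) for all z ∈ Ω, then the function z ↦ h(z)·h''(z)/h'(z)² is constant on Ω, and this constant is real. -/
open Complex

/-- Key step of the classification of 𝒯¹: if `h` is holomorphic on a connected open
set `Ω`, twice complex differentiable, with `h` and `h'` nowhere zero, and
`conj (h'' z) * (h' z)² = μ z * h z` for some real-valued `μ`, then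
`z ↦ h z * h'' z / (h' z)²` is a real constant on `Ω`. -/
theorem stmt_3 (Ω : Set ℂ) (hΩ : IsOpen Ω) (hconn : IsPreconnected Ω)
    (h : ℂ → ℂ) (hdiff : ∀ z ∈ Ω, DifferentiableAt ℂ h z)
    (hdiff2 : ∀ z ∈ Ω, DifferentiableAt ℂ (deriv h) z)
    (hne : ∀ z ∈ Ω, h z ≠ 0) (hne' : ∀ z ∈ Ω, deriv h z ≠ 0)
    (μ : ℂ → ℝ)
    (hμ : ∀ z ∈ Ω, (starRingEnd ℂ) (deriv (deriv h) z) * (deriv h z) ^ 2 = (μ z : ℂ) * h z) :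
    ∃ c : ℝ, ∀ z ∈ Ω, h z * deriv (deriv h) z / (deriv h z) ^ 2 = (c : ℂ) := by
  rcases Set.eq_empty_or_nonempty Ω with rfl | ⟨z₀, hz₀⟩
  · exact ⟨0, by simp⟩
  set g : ℂ → ℂ := fun z => h z * deriv (deriv h) z / (deriv h z) ^ 2 with hg
  -- h is analytic on Ω, hence so are its derivatives
  have hd : DifferentiableOn ℂ h Ω := fun z hz => (hdiff z hz).differentiableWithinAt
  have hA : AnalyticOnNhd ℂ h Ω := hd.analyticOnNhd hΩ
  have hA' : AnalyticOnNhd ℂ (deriv h) Ω := hA.deriv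
  have hA'' : AnalyticOnNhd ℂ (deriv (deriv h)) Ω := hA'.deriv
  have hgA : AnalyticOnNhd ℂ g Ω := fun z hz =>
    ((hA z hz).mul (hA'' z hz)).div ((hA' z hz).pow 2) (pow_ne_zero 2 (hne' z hz))
  -- g is real-valued on Ω
  have hreal : ∀ z ∈ Ω,
      g z = ((μ z * Complex.normSq (h z) / Complex.normSq ((deriv h z) ^ 2) : ℝ) : ℂ) := by
    intro z hz
    have hc := congrArg (starRingEnd ℂ) (hμ z hz)
    simp only [map_mul, Complex.conj_conj, Complex.conj_ofReal] at hc
    -- hc : deriv (deriv h) z * conj ((deriv h z)^2) = μ z * conj (h z)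
    have hB : (deriv h z) ^ 2 ≠ 0 := pow_ne_zero 2 (hne' z hz)
    have hns : (deriv h z) ^ 2 * (starRingEnd ℂ) ((deriv h z) ^ 2) ≠ 0 :=
      mul_ne_zero hB (by simpa using star_ne_zero.mpr hB)
    rw [hg]
    simp only
    rw [Complex.ofReal_div, Complex.ofReal_mul, ← Complex.mul_conj, ← Complex.mul_conj,
      div_eq_div_iff hB hns]
    linear_combination (h z * (deriv h z) ^ 2) * hc
  -- open mapping theorem: g is constant or open
  rcases hgA.is_constant_or_isOpen hconn with ⟨w, hw⟩ | hopen
  · refine ⟨(μ z₀ * Complex.normSq (h z₀) / Complex.normSq ((deriv h z₀) ^ 2) : ℝ), fun z hz => ?_⟩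
    rw [show (h z * deriv (deriv h) z / (deriv h z) ^ 2 : ℂ) = g z from rfl, hw z hz,
      ← hw z₀ hz₀, hreal z₀ hz₀]
  · exfalso
    have hopen' : IsOpen (g '' Ω) := hopen Ω le_rfl hΩ
    obtain ⟨ε, hε, hball⟩ := Metric.isOpen_iff.mp hopen' (g z₀) ⟨z₀, hz₀, rfl⟩
    have him : ∀ w ∈ g '' Ω, w.im = 0 := by
      rintro w ⟨z, hz, rfl⟩
      rw [hreal z hz]; exact Complex.ofReal_im _
    have hmem : g z₀ + ((ε / 2 : ℝ) : ℂ) * I ∈ g '' Ω := by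
      apply hball
      simp only [Metric.mem_ball, dist_eq_norm, add_sub_cancel_left, norm_mul, Complex.norm_real,
        Complex.norm_I, mul_one, Real.norm_eq_abs, abs_of_pos (half_pos hε)]
      linarith
    have h1 := him _ hmem
    have h2 := him (g z₀) ⟨z₀, hz₀, rfl⟩
    simp [Complex.add_im, h2] at h1
    linarith
end

section
/- Let h be holomorphic on ℂᵐ and g holomorphic on ℂⁿ, and suppose there are real-valued functions μ, ν with Σᵢⱼ conj(∂²h/∂zᵢ∂zⱼ) · (∂h/∂zᵢ)(∂h/∂zⱼ) = μ·h and Σ_{αβ} conj(∂²g/∂w_α∂w_β) · (∂g/∂w_α)(∂g/∂w_β) = ν·g. Then H(z,w) := h(z)g(w) satisfies Σ_{k,l} conj(∂²H)·(∂H)(∂H) = (μ|g|² + ν|h|² + 2|∇_z h|²|∇_w g|²)·H, where the sum runs over all m+n complex variables; in particular H satisfies the same type of identity with a real-valued multiplier. -/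
/-!
By the product rule the first partials of `H = h ⊗ g` are `h_i g` and `h g_α`, and its Hessian
has blocks `h_ij g`, `h_i g_β`, `h_j g_α`, `h g_αβ`. Contracting the conjugated Hessian with
the gradient twice, the two diagonal blocks factor as `(μ h)(|g|² g)` and `(ν g)(|h|² h)`, while
each mixed block is `|∇h|² |∇g|² h g`.
-/

open ComplexConjugate

section ProductRule

variable {𝕜 E₁ E₂ : Type*} [NontriviallyNormedField 𝕜]
  [NormedAddCommGroup E₁] [NormedSpace 𝕜 E₁] [NormedAddCommGroup E₂] [NormedSpace 𝕜 E₂]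
  {F : E₁ → 𝕜} {G : E₂ → 𝕜}

theorem fderiv_mul_fst_snd {x : E₁} {y : E₂} (hF : DifferentiableAt 𝕜 F x)
    (hG : DifferentiableAt 𝕜 G y) (v : E₁ × E₂) :
    fderiv 𝕜 (fun q : E₁ × E₂ => F q.1 * G q.2) (x, y) v
      = fderiv 𝕜 F x v.1 * G y + F x * fderiv 𝕜 G y v.2 := by
  have hF' : HasFDerivAt (fun q : E₁ × E₂ => F q.1)
      ((fderiv 𝕜 F x).comp (ContinuousLinearMap.fst 𝕜 E₁ E₂)) (x, y) :=
    hF.hasFDerivAt.comp (x, y) hasFDerivAt_fst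
  have hG' : HasFDerivAt (fun q : E₁ × E₂ => G q.2)
      ((fderiv 𝕜 G y).comp (ContinuousLinearMap.snd 𝕜 E₁ E₂)) (x, y) :=
    hG.hasFDerivAt.comp (x, y) hasFDerivAt_snd
  rw [HasFDerivAt.fderiv (f := fun q : E₁ × E₂ => F q.1 * G q.2) (hF'.mul hG')]
  simp only [add_apply, smul_apply, smul_eq_mul, ContinuousLinearMap.comp_apply,
    ContinuousLinearMap.coe_fst', ContinuousLinearMap.coe_snd']
  ring

theorem fderiv_mul_fst_snd_apply_left (hF : Differentiable 𝕜 F) (hG : Differentiable 𝕜 G)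
    (u : E₁) :
    (fun p : E₁ × E₂ => fderiv 𝕜 (fun q : E₁ × E₂ => F q.1 * G q.2) p (u, 0))
      = fun p => fderiv 𝕜 F p.1 u * G p.2 := by
  funext p
  simp [fderiv_mul_fst_snd (hF p.1) (hG p.2)]

theorem fderiv_mul_fst_snd_apply_right (hF : Differentiable 𝕜 F) (hG : Differentiable 𝕜 G)
    (v : E₂) :
    (fun p : E₁ × E₂ => fderiv 𝕜 (fun q : E₁ × E₂ => F q.1 * G q.2) p (0, v))
      = fun p => F p.1 * fderiv 𝕜 G p.2 v := by
  funext p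
  simp [fderiv_mul_fst_snd (hF p.1) (hG p.2)]

end ProductRule

section ConjHessian

variable {𝕜 : Type*} [RCLike 𝕜] {ι κ : Type*} [Fintype ι] [Fintype κ]

/-- `∑ₖₗ conj (∂ₗ∂ₖ F) ∂ₖF ∂ₗF` with partials along the directions `e`; membership of `F` in `𝒯ᵐ`
says that this equals `μ F` for a real `μ` when `e` is the standard basis. -/
noncomputable def conjHessianForm {E : Type*} [NormedAddCommGroup E] [NormedSpace 𝕜 E]
    (F : E → 𝕜) (e : ι → E) (x : E) : 𝕜 :=
  ∑ k, ∑ l, conj (fderiv 𝕜 (fun y => fderiv 𝕜 F y (e k)) x (e l))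
    * fderiv 𝕜 F x (e k) * fderiv 𝕜 F x (e l)

theorem sum_sum_conj_mul_right_mul_mul (A : ι → ι → 𝕜) (a : ι → 𝕜) (c : 𝕜) :
    ∑ i, ∑ j, conj (A i j * c) * (a i * c) * (a j * c)
      = (∑ i, ∑ j, conj (A i j) * a i * a j) * ((‖c‖ : 𝕜) ^ 2 * c) := by
  rw [← RCLike.conj_mul]
  simp_rw [Finset.sum_mul, map_mul]
  exact Finset.sum_congr rfl fun i _ => Finset.sum_congr rfl fun j _ => by ring

theorem sum_sum_conj_mul_left_mul_mul (A : ι → ι → 𝕜) (a : ι → 𝕜) (c : 𝕜) :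
    ∑ i, ∑ j, conj (c * A i j) * (c * a i) * (c * a j)
      = (∑ i, ∑ j, conj (A i j) * a i * a j) * ((‖c‖ : 𝕜) ^ 2 * c) := by
  simp_rw [← sum_sum_conj_mul_right_mul_mul, mul_comm c]

theorem sum_sum_conj_mul_mul_mul_cross (a : ι → 𝕜) (b : κ → 𝕜) (c d : 𝕜) :
    ∑ i, ∑ β, conj (a i * b β) * (a i * d) * (c * b β)
      = ((∑ i, ‖a i‖ ^ 2 : ℝ) : 𝕜) * ((∑ β, ‖b β‖ ^ 2 : ℝ) : 𝕜) * (c * d) := by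
  push_cast
  simp_rw [← RCLike.conj_mul, Finset.sum_mul_sum, Finset.sum_mul, map_mul]
  exact Finset.sum_congr rfl fun i _ => Finset.sum_congr rfl fun β _ => by ring

theorem sum_sum_conj_mul_mul_mul_cross_swap (a : ι → 𝕜) (b : κ → 𝕜) (c d : 𝕜) :
    ∑ β, ∑ i, conj (a i * b β) * (c * b β) * (a i * d)
      = ((∑ i, ‖a i‖ ^ 2 : ℝ) : 𝕜) * ((∑ β, ‖b β‖ ^ 2 : ℝ) : 𝕜) * (c * d) := by
  rw [Finset.sum_comm, ← sum_sum_conj_mul_mul_mul_cross]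
  exact Finset.sum_congr rfl fun i _ => Finset.sum_congr rfl fun β _ => by ring

variable {E₁ E₂ : Type*} [NormedAddCommGroup E₁] [NormedSpace 𝕜 E₁]
  [NormedAddCommGroup E₂] [NormedSpace 𝕜 E₂]

theorem conjHessianForm_mul_fst_snd {F : E₁ → 𝕜} {G : E₂ → 𝕜} {x : E₁} {y : E₂}
    (hF : Differentiable 𝕜 F) (hG : Differentiable 𝕜 G)
    (hF₂ : DifferentiableAt 𝕜 (fderiv 𝕜 F) x) (hG₂ : DifferentiableAt 𝕜 (fderiv 𝕜 G) y)
    (u : ι → E₁) (v : κ → E₂) :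
    conjHessianForm (fun p : E₁ × E₂ => F p.1 * G p.2)
        (Sum.elim (fun i => (u i, 0)) (fun α => (0, v α))) (x, y)
      = conjHessianForm F u x * ((‖G y‖ : 𝕜) ^ 2 * G y)
        + conjHessianForm G v y * ((‖F x‖ : 𝕜) ^ 2 * F x)
        + 2 * ((∑ i, ‖fderiv 𝕜 F x (u i)‖ ^ 2 : ℝ) : 𝕜)
            * ((∑ α, ‖fderiv 𝕜 G y (v α)‖ ^ 2 : ℝ) : 𝕜) * (F x * G y) := by
  have hFu : ∀ i, DifferentiableAt 𝕜 (fun x => fderiv 𝕜 F x (u i)) x :=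
    fun i => hF₂.clm_apply (differentiableAt_const _)
  have hGv : ∀ α, DifferentiableAt 𝕜 (fun y => fderiv 𝕜 G y (v α)) y :=
    fun α => hG₂.clm_apply (differentiableAt_const _)
  simp only [conjHessianForm, Fintype.sum_sum_type, Sum.elim_inl, Sum.elim_inr,
    fderiv_mul_fst_snd_apply_left hF hG, fderiv_mul_fst_snd_apply_right hF hG,
    fderiv_mul_fst_snd (hFu _) (hG y), fderiv_mul_fst_snd (hF x) (hGv _),
    fderiv_mul_fst_snd (hF x) (hG y), map_zero, mul_zero, zero_mul, add_zero, zero_add,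
    Finset.sum_add_distrib]
  rw [sum_sum_conj_mul_right_mul_mul, sum_sum_conj_mul_left_mul_mul,
    sum_sum_conj_mul_mul_mul_cross, sum_sum_conj_mul_mul_mul_cross_swap]
  ring

end ConjHessian

/-- Products of ℝ-holomorphic functions: if `h ∈ 𝒯ᵐ` with multiplier `μ` and
`g ∈ 𝒯ⁿ` with multiplier `ν`, then `H (z, w) = h z * g w` satisfies the analogous
identity in the `m + n` complex variables with the real-valued multiplier
`μ |g|² + ν |h|² + 2 |∇_z h|² |∇_w g|²`. -/
theorem stmt_6 (m n : ℕ)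
    (h : (Fin m → ℂ) → ℂ) (g : (Fin n → ℂ) → ℂ)
    (hdiff : Differentiable ℂ h) (hdiff2 : Differentiable ℂ (fun z => fderiv ℂ h z))
    (gdiff : Differentiable ℂ g) (gdiff2 : Differentiable ℂ (fun w => fderiv ℂ g w))
    (μ : (Fin m → ℂ) → ℝ) (ν : (Fin n → ℂ) → ℝ)
    (hμ : ∀ z, ∑ i : Fin m, ∑ j : Fin m,
        (starRingEnd ℂ) (fderiv ℂ (fun z' => fderiv ℂ h z' (Pi.single i 1)) z (Pi.single j 1))
          * fderiv ℂ h z (Pi.single i 1) * fderiv ℂ h z (Pi.single j 1)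
        = (μ z : ℂ) * h z)
    (hν : ∀ w, ∑ α : Fin n, ∑ β : Fin n,
        (starRingEnd ℂ) (fderiv ℂ (fun w' => fderiv ℂ g w' (Pi.single α 1)) w (Pi.single β 1))
          * fderiv ℂ g w (Pi.single α 1) * fderiv ℂ g w (Pi.single β 1)
        = (ν w : ℂ) * g w) :
    ∀ z : Fin m → ℂ, ∀ w : Fin n → ℂ,
      (let H : (Fin m → ℂ) × (Fin n → ℂ) → ℂ := fun p => h p.1 * g p.2
       let e : Fin m ⊕ Fin n → (Fin m → ℂ) × (Fin n → ℂ) :=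
         Sum.elim (fun i => (Pi.single i 1, 0)) (fun α => (0, Pi.single α 1))
       ∑ k : Fin m ⊕ Fin n, ∑ l : Fin m ⊕ Fin n,
          (starRingEnd ℂ) (fderiv ℂ (fun p => fderiv ℂ H p (e k)) (z, w) (e l))
            * fderiv ℂ H (z, w) (e k) * fderiv ℂ H (z, w) (e l)
        = ((μ z * ‖g w‖ ^ 2 + ν w * ‖h z‖ ^ 2
            + 2 * (∑ i : Fin m, ‖fderiv ℂ h z (Pi.single i 1)‖ ^ 2)
                * (∑ α : Fin n, ‖fderiv ℂ g w (Pi.single α 1)‖ ^ 2) : ℝ) : ℂ)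
          * H (z, w)) := by
  intro z w
  have key := conjHessianForm_mul_fst_snd hdiff gdiff (hdiff2 z) (gdiff2 w)
    (fun i : Fin m => (Pi.single i 1 : Fin m → ℂ)) (fun α : Fin n => (Pi.single α 1 : Fin n → ℂ))
  rw [show conjHessianForm h _ z = _ from hμ z, show conjHessianForm g _ w = _ from hν w] at key
  show conjHessianForm _ _ (z, w) = _
  rw [key]
  simp only [RCLike.ofReal_eq_complex_ofReal]
  push_cast
  ring
end

section
/- Let h be holomorphic on an open set in ℂᵐ, nowhere vanishing there, satisfying Σᵢⱼ conj(∂²h/∂zᵢ∂zⱼ)(∂h/∂zᵢ)(∂h/∂zⱼ) = μ·h with μ real-valued, and let r ∈ ℤ. Then H := hʳ satisfies Σᵢⱼ conj(∂²H/∂zᵢ∂zⱼ)(∂H/∂zᵢ)(∂H/∂zⱼ) = μ₁·H with the real-valued function μ₁ = r³((r-1)|h|^{2r-4}|∇h|⁴ + μ|h|^{2r-2}), where |∇h|² = Σᵢ|∂h/∂zᵢ|². -/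
/-!
By the chain rule, `∂ᵢH = r hʳ⁻¹ ∂ᵢh` and
`∂ⱼ∂ᵢH = r (r-1) hʳ⁻² ∂ᵢh ∂ⱼh + r hʳ⁻¹ ∂ⱼ∂ᵢh`. Substituting, the sum for `H` splits into
`r³ (r-1) h̄ʳ⁻² h²ʳ⁻² |∇h|⁴` and `r³ h̄ʳ⁻¹ h²ʳ⁻² · μ h`. Since `h̄ᵏ hᵏ = |h|²ᵏ`, both are real
multiples of `hʳ`.
-/

open Complex Filter Topology

section ZPow

variable {E : Type*} [NormedAddCommGroup E] [NormedSpace ℂ E] {h : E → ℂ} {z : E}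

theorem DifferentiableAt.hasFDerivAt_zpow (hd : DifferentiableAt ℂ h z) (hz : h z ≠ 0) (r : ℤ) :
    HasFDerivAt (fun w => h w ^ r) (((r : ℂ) * h z ^ (r - 1)) • fderiv ℂ h z) z :=
  (hasDerivAt_zpow r (h z) (Or.inl hz)).comp_hasFDerivAt z hd.hasFDerivAt

theorem fderiv_zpow_apply (hd : DifferentiableAt ℂ h z) (hz : h z ≠ 0) (r : ℤ) (u : E) :
    fderiv ℂ (fun w => h w ^ r) z u = r * h z ^ (r - 1) * fderiv ℂ h z u := by
  simp [(hd.hasFDerivAt_zpow hz r).fderiv]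

theorem fderiv_fderiv_zpow_apply (hd : ∀ᶠ w in 𝓝 z, DifferentiableAt ℂ h w)
    (hd2 : DifferentiableAt ℂ (fderiv ℂ h) z) (hz : h z ≠ 0) (r : ℤ) (u v : E) :
    fderiv ℂ (fun w => fderiv ℂ (fun w' => h w' ^ r) w u) z v
      = r * (r - 1) * h z ^ (r - 2) * fderiv ℂ h z v * fderiv ℂ h z u
        + r * h z ^ (r - 1) * fderiv ℂ (fun w => fderiv ℂ h w u) z v := by
  have hne : ∀ᶠ w in 𝓝 z, h w ≠ 0 := hd.self_of_nhds.continuousAt.eventually_ne hz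
  have hfirst : (fun w => fderiv ℂ (fun w' => h w' ^ r) w u)
      =ᶠ[𝓝 z] fun w => (r * h w ^ (r - 1)) * fderiv ℂ h w u := by
    filter_upwards [hd, hne] with w hdw hw
    exact fderiv_zpow_apply hdw hw r u
  have hcoeff := (hd.self_of_nhds.hasFDerivAt_zpow hz (r - 1)).const_mul (r : ℂ)
  have hdu : DifferentiableAt ℂ (fun w => fderiv ℂ h w u) z :=
    hd2.clm_apply (differentiableAt_const u)
  rw [hfirst.fderiv_eq, (hcoeff.fun_mul hdu.hasFDerivAt).fderiv]
  simp only [add_apply, smul_apply, smul_eq_mul,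
    Int.cast_sub, Int.cast_one, show r - 1 - 1 = r - 2 by ring]
  ring

end ZPow

theorem ofReal_norm_zpow_two_mul (a : ℂ) (k : ℤ) :
    (‖a‖ : ℂ) ^ (2 * k) = (starRingEnd ℂ) a ^ k * a ^ k := by
  rw [zpow_mul, ← mul_zpow, conj_mul']
  norm_cast

theorem Real.rpow_two_mul_sub_intCast (x : ℝ) (r k : ℤ) :
    x ^ (2 * (r : ℝ) - 2 * k) = x ^ (2 * (r - k)) := by
  rw [← Real.rpow_intCast]
  push_cast
  ring_nf

theorem sum_conj_mul_self {ι : Type*} (s : Finset ι) (c : ι → ℂ) :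
    ∑ i ∈ s, (starRingEnd ℂ) (c i) * c i = ((∑ i ∈ s, ‖c i‖ ^ 2 : ℝ) : ℂ) := by
  push_cast
  exact Finset.sum_congr rfl fun i _ => conj_mul' (c i)

theorem sum_conj_zpow_derivs_eq {ι : Type*} [Fintype ι] {a : ℂ} (ha : a ≠ 0) (r : ℤ) (μ : ℝ)
    (c : ι → ℂ) (d : ι → ι → ℂ)
    (hμ : ∑ i, ∑ j, (starRingEnd ℂ) (d i j) * c i * c j = (μ : ℂ) * a) :
    ∑ i, ∑ j, (starRingEnd ℂ) (r * (r - 1) * a ^ (r - 2) * c j * c i + r * a ^ (r - 1) * d i j)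
        * (r * a ^ (r - 1) * c i) * (r * a ^ (r - 1) * c j)
      = (((r : ℝ) ^ 3 * (((r : ℝ) - 1) * ‖a‖ ^ (2 * (r : ℝ) - 4) * (∑ i, ‖c i‖ ^ 2) ^ 2
          + μ * ‖a‖ ^ (2 * (r : ℝ) - 2)) : ℝ) : ℂ) * a ^ r := by
  set A : ℂ := r * (r - 1) * a ^ (r - 2)
  set B : ℂ := r * a ^ (r - 1)
  have hterm : ∀ i j, (starRingEnd ℂ) (A * c j * c i + B * d i j) * (B * c i) * (B * c j)
      = (starRingEnd ℂ) A * B ^ 2 * ((starRingEnd ℂ) (c i) * c i * ((starRingEnd ℂ) (c j) * c j))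
        + (starRingEnd ℂ) B * B ^ 2 * ((starRingEnd ℂ) (d i j) * c i * c j) := by
    intro i j
    simp only [map_add, map_mul]
    ring
  simp only [hterm, Finset.sum_add_distrib, ← Finset.mul_sum, ← Finset.sum_mul, hμ,
    sum_conj_mul_self]
  rw [show 2 * (r : ℝ) - 4 = 2 * r - 2 * (2 : ℤ) by norm_num,
    show 2 * (r : ℝ) - 2 = 2 * r - 2 * (1 : ℤ) by norm_num,
    Real.rpow_two_mul_sub_intCast, Real.rpow_two_mul_sub_intCast]
  set G : ℝ := ∑ i, ‖c i‖ ^ 2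
  push_cast
  rw [ofReal_norm_zpow_two_mul, ofReal_norm_zpow_two_mul]
  simp only [A, B, map_mul, map_sub, map_intCast, map_one, map_zpow₀]
  have e1 : a ^ (r - 1) * a ^ (r - 1) = a ^ (r - 2) * a ^ r := by
    rw [← zpow_add₀ ha, ← zpow_add₀ ha]
    ring_nf
  have e2 : a ^ (r - 1) * a ^ (r - 1) * a = a ^ (r - 1) * a ^ r := by
    rw [mul_assoc, ← zpow_add_one₀ ha, sub_add_cancel]
  linear_combination ((r : ℂ) ^ 3 * ((r : ℂ) - 1) * (G : ℂ) ^ 2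
      * (starRingEnd ℂ) a ^ (r - 2)) * e1
    + ((r : ℂ) ^ 3 * (μ : ℂ) * (starRingEnd ℂ) a ^ (r - 1)) * e2

/-- Powers of ℝ-holomorphic functions: if `h` is holomorphic and nonvanishing on the open
set `Ω ⊆ ℂᵐ` with `Σᵢⱼ conj(h''_{zᵢzⱼ}) h'_{zᵢ} h'_{zⱼ} = μ h` (`μ` real-valued), and
`r ∈ ℤ`, then `H = hʳ` satisfies the same identity with the real-valued multiplier
`μ₁ = r³ ((r-1) |h|^{2r-4} |∇h|⁴ + μ |h|^{2r-2})`. -/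
theorem stmt_7 (m : ℕ) (Ω : Set (Fin m → ℂ)) (hΩ : IsOpen Ω)
    (h : (Fin m → ℂ) → ℂ)
    (hdiff : ∀ z ∈ Ω, DifferentiableAt ℂ h z)
    (hdiff2 : ∀ z ∈ Ω, DifferentiableAt ℂ (fun z' => fderiv ℂ h z') z)
    (hne : ∀ z ∈ Ω, h z ≠ 0)
    (μ : (Fin m → ℂ) → ℝ)
    (hμ : ∀ z ∈ Ω, ∑ i : Fin m, ∑ j : Fin m,
        (starRingEnd ℂ) (fderiv ℂ (fun z' => fderiv ℂ h z' (Pi.single i 1)) z (Pi.single j 1))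
          * fderiv ℂ h z (Pi.single i 1) * fderiv ℂ h z (Pi.single j 1)
        = (μ z : ℂ) * h z)
    (r : ℤ) :
    ∀ z ∈ Ω,
      (let H : (Fin m → ℂ) → ℂ := fun z' => h z' ^ r
       let gradsq : ℝ := ∑ i : Fin m, ‖fderiv ℂ h z (Pi.single i 1)‖ ^ 2
       let μ₁ : ℝ := (r : ℝ) ^ 3 * (((r : ℝ) - 1) * ‖h z‖ ^ (2 * (r : ℝ) - 4)
            * gradsq ^ 2 + μ z * ‖h z‖ ^ (2 * (r : ℝ) - 2))
       ∑ i : Fin m, ∑ j : Fin m,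
          (starRingEnd ℂ) (fderiv ℂ (fun z' => fderiv ℂ H z' (Pi.single i 1)) z (Pi.single j 1))
            * fderiv ℂ H z (Pi.single i 1) * fderiv ℂ H z (Pi.single j 1)
        = (μ₁ : ℂ) * H z) := by
  intro z hz
  have hd : ∀ᶠ w in 𝓝 z, DifferentiableAt ℂ h w := eventually_of_mem (hΩ.mem_nhds hz) hdiff
  simp only [fderiv_zpow_apply (hdiff z hz) (hne z hz),
    fderiv_fderiv_zpow_apply hd (hdiff2 z hz) (hne z hz)]
  exact sum_conj_zpow_derivs_eq (hne z hz) r (μ z) _ _ (hμ z hz)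
end

section
/- The determinant h(z) = det of the 3×3 matrix with entries z₁,…,z₉ (row by row), viewed as a holomorphic cubic form on ℂ⁹, satisfies Σᵢⱼ conj(∂²h/∂zᵢ∂zⱼ)(∂h/∂zᵢ)(∂h/∂zⱼ) = 2(Σᵢ₌₁⁹ |zᵢ|²)·h(z) for all z ∈ ℂ⁹. -/
open Complex ComplexConjugate

/-!
Write `h` for the determinant in flat coordinates. Its gradient is the cofactor vector `C(z)`, and
its Hessian is the full polarization `P` of `h`, the trilinear form with `P(z, z, z) = 6 h(z)`;
since `P` has integer coefficients, the conjugated Hessian at `z` is `P(·, ·, z̄)`. The left-hand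
side is therefore `P(C(z), C(z), z̄)`, and because `adj (adj Z) = det Z • Z` for `3 × 3` matrices,
`P(C(z), C(z), x) = 2 h(z) ∑ᵢ zᵢ xᵢ`.
-/

theorem LinearMap.sum_sum_apply_single_mul_mul {ι R : Type*} [CommSemiring R] [Fintype ι]
    [DecidableEq ι] (B : (ι → R) →ₗ[R] (ι → R) →ₗ[R] R) (a b : ι → R) :
    ∑ i, ∑ j, B (Pi.single i 1) (Pi.single j 1) * a i * b j = B a b := by
  conv_rhs => rw [← Matrix.toLinearMap₂'_toMatrix' (R := R) B, Matrix.toLinearMap₂'_apply]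
  simp only [LinearMap.toMatrix₂'_apply, smul_eq_mul]
  exact Finset.sum_congr rfl fun _ _ => Finset.sum_congr rfl fun _ _ => by ring

theorem Fin.sum_univ_nine {M : Type*} [AddCommMonoid M] (f : Fin 9 → M) :
    ∑ i, f i = f 0 + f 1 + f 2 + f 3 + f 4 + f 5 + f 6 + f 7 + f 8 := by
  rw [Fin.sum_univ_castSucc, Fin.sum_univ_eight]
  rfl

section Algebra

variable {R : Type*} [CommRing R]

def flatDet (z : Fin 9 → R) : R :=
  z 0 * z 4 * z 8 - z 0 * z 5 * z 7 - z 1 * z 3 * z 8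
    + z 1 * z 5 * z 6 + z 2 * z 3 * z 7 - z 2 * z 4 * z 6

def cofactor (z : Fin 9 → R) : Fin 9 → R :=
  ![z 4 * z 8 - z 5 * z 7, z 5 * z 6 - z 3 * z 8, z 3 * z 7 - z 4 * z 6,
    z 2 * z 7 - z 1 * z 8, z 0 * z 8 - z 2 * z 6, z 1 * z 6 - z 0 * z 7,
    z 1 * z 5 - z 2 * z 4, z 2 * z 3 - z 0 * z 5, z 0 * z 4 - z 1 * z 3]

/-- The coefficient of `s t u` in `flatDet (s • x + t • y + u • w)`. -/
def polarDet (x y w : Fin 9 → R) : R :=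
  flatDet (x + y + w) - flatDet (x + y) - flatDet (x + w) - flatDet (y + w)
    + flatDet x + flatDet y + flatDet w

theorem polarDet_cofactor_cofactor (z x : Fin 9 → R) :
    polarDet (cofactor z) (cofactor z) x = 2 * flatDet z * (z ⬝ᵥ x) := by
  simp only [polarDet, flatDet, cofactor, dotProduct, Fin.sum_univ_nine, Pi.add_apply,
    Matrix.cons_val]
  ring

theorem star_flatDet [StarRing R] (z : Fin 9 → R) : star (flatDet z) = flatDet (star z) := by
  simp only [flatDet, star_sub, star_add, star_mul', Pi.star_apply]

theorem star_polarDet [StarRing R] (x y w : Fin 9 → R) :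
    star (polarDet x y w) = polarDet (star x) (star y) (star w) := by
  simp only [polarDet, star_sub, star_add, star_flatDet]

def polarDetBilin (w : Fin 9 → R) : (Fin 9 → R) →ₗ[R] (Fin 9 → R) →ₗ[R] R :=
  LinearMap.mk₂ R (fun x y => polarDet x y w)
    (fun _ _ _ => by simp only [polarDet, flatDet, Pi.add_apply]; ring)
    (fun _ _ _ => by simp only [polarDet, flatDet, Pi.add_apply, Pi.smul_apply, smul_eq_mul]; ring)
    (fun _ _ _ => by simp only [polarDet, flatDet, Pi.add_apply]; ring)
    (fun _ _ _ => by simp only [polarDet, flatDet, Pi.add_apply, Pi.smul_apply, smul_eq_mul]; ring)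

theorem sum_sum_polarDet_single_mul_mul (w a b : Fin 9 → R) :
    ∑ i, ∑ j, polarDet (Pi.single i 1) (Pi.single j 1) w * a i * b j = polarDet a b w :=
  (polarDetBilin w).sum_sum_apply_single_mul_mul a b

end Algebra

section Calculus

variable {𝕜 : Type*} [NontriviallyNormedField 𝕜]

theorem fderiv_flatDet (w v : Fin 9 → 𝕜) : fderiv 𝕜 flatDet w v = cofactor w ⬝ᵥ v := by
  unfold flatDet
  simp (disch := fun_prop) only [fderiv_fun_sub, fderiv_fun_add, fderiv_fun_mul, fderiv_apply]
  simp only [fderiv_fun_id, ContinuousLinearMap.comp_id, add_apply, sub_apply, smul_apply,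
    ContinuousLinearMap.proj_apply, smul_eq_mul, cofactor, dotProduct, Fin.sum_univ_nine,
    Matrix.cons_val]
  ring

theorem fderiv_fderiv_flatDet (w u v : Fin 9 → 𝕜) :
    fderiv 𝕜 (fun z => fderiv 𝕜 flatDet z u) w v = polarDet u v w := by
  simp only [fderiv_flatDet, cofactor, dotProduct, Fin.sum_univ_nine, Matrix.cons_val]
  simp (disch := fun_prop) only [fderiv_fun_sub, fderiv_fun_add, fderiv_fun_mul, fderiv_apply,
    fderiv_fun_const]
  simp only [fderiv_fun_id, ContinuousLinearMap.comp_id, ContinuousLinearMap.comp_zero,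
    add_apply, sub_apply, smul_apply, zero_apply, ContinuousLinearMap.proj_apply, Pi.zero_apply,
    smul_eq_mul, polarDet, flatDet, Pi.add_apply]
  ring

end Calculus

/-- The 3×3 determinant `h z = z₁z₅z₉ − z₁z₆z₈ − z₂z₄z₉ + z₂z₆z₇ + z₃z₄z₈ − z₃z₅z₇`,
a holomorphic cubic form on ℂ⁹, satisfies
`Σᵢⱼ conj(∂²h/∂zᵢ∂zⱼ) (∂h/∂zᵢ) (∂h/∂zⱼ) = 2 (Σᵢ |zᵢ|²) h z` for all `z ∈ ℂ⁹`. -/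
theorem stmt_9 :
    ∀ z : Fin 9 → ℂ,
      (let h : (Fin 9 → ℂ) → ℂ := fun z' =>
          z' 0 * z' 4 * z' 8 - z' 0 * z' 5 * z' 7 - z' 1 * z' 3 * z' 8
            + z' 1 * z' 5 * z' 6 + z' 2 * z' 3 * z' 7 - z' 2 * z' 4 * z' 6
       ∑ i : Fin 9, ∑ j : Fin 9,
          (starRingEnd ℂ) (fderiv ℂ (fun z' => fderiv ℂ h z' (Pi.single i 1)) z (Pi.single j 1))
            * fderiv ℂ h z (Pi.single i 1) * fderiv ℂ h z (Pi.single j 1)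
        = ((2 * ∑ i : Fin 9, ‖z i‖ ^ 2 : ℝ) : ℂ) * h z) := by
  intro z
  change ∑ i, ∑ j, conj (fderiv ℂ (fun z' => fderiv ℂ flatDet z' (Pi.single i 1)) z
      (Pi.single j 1)) * fderiv ℂ flatDet z (Pi.single i 1) * fderiv ℂ flatDet z (Pi.single j 1)
    = _ * flatDet z
  have gradient (i : Fin 9) : fderiv ℂ flatDet z (Pi.single i 1) = cofactor z i := by
    rw [fderiv_flatDet, dotProduct_single, mul_one]
  have conj_hessian (i j : Fin 9) :
      conj (fderiv ℂ (fun z' => fderiv ℂ flatDet z' (Pi.single i 1)) z (Pi.single j 1))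
        = polarDet (Pi.single i 1) (Pi.single j 1) (star z) := by
    rw [fderiv_fderiv_flatDet, starRingEnd_apply, star_polarDet, ← Pi.single_star,
      ← Pi.single_star, star_one]
  have norm_sq : z ⬝ᵥ star z = ∑ i, (‖z i‖ ^ 2 : ℂ) :=
    Finset.sum_congr rfl fun i _ => mul_conj' (z i)
  simp only [gradient, conj_hessian]
  rw [sum_sum_polarDet_single_mul_mul, polarDet_cofactor_cofactor, norm_sq]
  push_cast
  ring
end

section
/- Let f(ξ) = Re h(z) − F(t) for ξ = (z,t) ∈ ℂᵐ × ℝᵏ, with h holomorphic and F of class C². Then the 1-Laplacian of f with respect to all 2m+k real variables satisfies −Δ₁f = |∇_z h|²·ΔF + Δ₁F + Re Σᵢⱼ conj(∂²h/∂zᵢ∂zⱼ)(∂h/∂zᵢ)(∂h/∂zⱼ), where Δ₁F := |DF|²ΔF − Σᵢⱼ F_{tᵢ}F_{tⱼ}F_{tᵢtⱼ} and |∇_z h|² = Σᵢ|∂h/∂zᵢ|². -/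
/-!
In the splitting `ξ = (z, t)` the function `f = u(z) - F(t)` has a block-diagonal Hessian, so
`Δ₁ f = |Du|² (-ΔF) + |DF|² Δu + Δ₁ u - Δ₁ F`. For `u = Re h` the Cauchy–Riemann equations give
`|Du|² = |∇_z h|²`, `Δu = 0` (`u` is harmonic) and `Σ u_a u_b u_ab = Re Σᵢⱼ conj(h_ij) h_i h_j`.
-/

open Complex ComplexConjugate

noncomputable section Along

variable {ι E : Type*} [Fintype ι] [NormedAddCommGroup E] [NormedSpace ℝ E]

-- Derivatives along a finite family of directions `e`; for `e` the real coordinate directions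
-- these are `|Df|²`, `D²f`, `Δf` and `Δ₁f`.

def gradSqAlong (e : ι → E) (f : E → ℝ) (x : E) : ℝ := ∑ a, fderiv ℝ f x (e a) ^ 2

def hessianAlong (e : ι → E) (f : E → ℝ) (x : E) (a b : ι) : ℝ :=
  fderiv ℝ (fun p => fderiv ℝ f p (e b)) x (e a)

def laplacianAlong (e : ι → E) (f : E → ℝ) (x : E) : ℝ := ∑ a, hessianAlong e f x a a

def oneLaplacianAlong (e : ι → E) (f : E → ℝ) (x : E) : ℝ :=
  gradSqAlong e f x * laplacianAlong e f x
    - ∑ a, ∑ b, fderiv ℝ f x (e a) * fderiv ℝ f x (e b) * hessianAlong e f x a b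

end Along

section Separated
variable {E E' : Type*} [NormedAddCommGroup E] [NormedSpace ℝ E]
  [NormedAddCommGroup E'] [NormedSpace ℝ E'] {u : E → ℝ} {v : E' → ℝ} {x : E} {y : E'}

theorem fderiv_sub_prod_apply (hu : DifferentiableAt ℝ u x) (hv : DifferentiableAt ℝ v y)
    (w : E) (w' : E') :
    fderiv ℝ (fun p : E × E' => u p.1 - v p.2) (x, y) (w, w')
      = fderiv ℝ u x w - fderiv ℝ v y w' := by
  have hfst : HasFDerivAt (fun p : E × E' => u p.1) ((fderiv ℝ u x).comp (.fst ℝ E E')) (x, y) :=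
    hu.hasFDerivAt.comp (x, y) hasFDerivAt_fst
  have hsnd : HasFDerivAt (fun p : E × E' => v p.2) ((fderiv ℝ v y).comp (.snd ℝ E E')) (x, y) :=
    hv.hasFDerivAt.comp (x, y) hasFDerivAt_snd
  rw [(hfst.fun_sub hsnd).fderiv]
  rfl

theorem fderiv_fderiv_sub_prod_apply (hu : Differentiable ℝ u) (hv : Differentiable ℝ v)
    (hu' : DifferentiableAt ℝ (fderiv ℝ u) x) (hv' : DifferentiableAt ℝ (fderiv ℝ v) y)
    (w w₁ : E) (w' w₁' : E') :
    fderiv ℝ (fun p => fderiv ℝ (fun q : E × E' => u q.1 - v q.2) p (w, w')) (x, y) (w₁, w₁')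
      = fderiv ℝ (fun a => fderiv ℝ u a w) x w₁ - fderiv ℝ (fun b => fderiv ℝ v b w') y w₁' := by
  have : (fun p : E × E' => fderiv ℝ (fun q : E × E' => u q.1 - v q.2) p (w, w'))
      = fun p => fderiv ℝ u p.1 w - fderiv ℝ v p.2 w' :=
    funext fun p => fderiv_sub_prod_apply (hu p.1) (hv p.2) w w'
  rw [this]
  exact fderiv_sub_prod_apply (hu'.clm_apply (differentiableAt_const w))
    (hv'.clm_apply (differentiableAt_const w')) w₁ w₁'

end Separated

section ProdFrame
variable {ι κ E E' : Type*} [Fintype ι] [Fintype κ] [NormedAddCommGroup E] [NormedSpace ℝ E]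
  [NormedAddCommGroup E'] [NormedSpace ℝ E'] {u : E → ℝ} {v : E' → ℝ} {x : E} {y : E'}

def prodFrame (e : ι → E) (e' : κ → E') : ι ⊕ κ → E × E' :=
  Sum.elim (fun i => (e i, 0)) (fun j => (0, e' j))

theorem oneLaplacianAlong_sub_prod (e : ι → E) (e' : κ → E') (hu : Differentiable ℝ u)
    (hv : Differentiable ℝ v) (hu' : DifferentiableAt ℝ (fderiv ℝ u) x)
    (hv' : DifferentiableAt ℝ (fderiv ℝ v) y) :
    oneLaplacianAlong (prodFrame e e') (fun p => u p.1 - v p.2) (x, y)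
      = gradSqAlong e u x * -laplacianAlong e' v y + gradSqAlong e' v y * laplacianAlong e u x
        + oneLaplacianAlong e u x - oneLaplacianAlong e' v y := by
  simp only [oneLaplacianAlong, gradSqAlong, laplacianAlong, hessianAlong, prodFrame,
    Fintype.sum_sum_type, Sum.elim_inl, Sum.elim_inr]
  simp only [fderiv_fderiv_sub_prod_apply hu hv hu' hv']
  simp only [fderiv_sub_prod_apply (hu x) (hv y), map_zero, sub_zero, zero_sub, fderiv_fun_const,
    Pi.zero_apply, zero_apply, mul_zero, Finset.sum_const_zero, add_zero, zero_add, neg_sq]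
  simp only [neg_mul, mul_neg, neg_neg, Finset.sum_neg_distrib]
  ring

end ProdFrame

section Holomorphic
variable {ι V : Type*} [Fintype ι] [NormedAddCommGroup V] [NormedSpace ℂ V] {h : V → ℂ} {z : V}

theorem fderiv_re_apply (hh : DifferentiableAt ℂ h z) (w : V) :
    fderiv ℝ (fun z => (h z).re) z w = (fderiv ℂ h z w).re := by
  have hre : HasFDerivAt (fun z => (h z).re) (reCLM.comp ((fderiv ℂ h z).restrictScalars ℝ)) z :=
    reCLM.hasFDerivAt.comp z (hh.hasFDerivAt.restrictScalars ℝ)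
  rw [hre.fderiv]
  rfl

theorem differentiable_fderiv_re (hh : Differentiable ℂ h) (hh' : Differentiable ℂ (fderiv ℂ h)) :
    Differentiable ℝ (fderiv ℝ fun z => (h z).re) := by
  have : (fderiv ℝ fun z => (h z).re) = fun z =>
      ContinuousLinearMap.compL ℝ V ℂ ℝ reCLM
        (ContinuousLinearMap.restrictScalarsL ℂ V ℂ ℝ ℝ (fderiv ℂ h z)) := by
    ext z w
    exact fderiv_re_apply (hh z) w
  rw [this]
  exact (ContinuousLinearMap.differentiable _).comp
    ((ContinuousLinearMap.differentiable _).comp (hh'.restrictScalars ℝ))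

theorem fderiv_fderiv_re_apply (hh : Differentiable ℂ h) (hh' : Differentiable ℂ (fderiv ℂ h))
    (w w₁ : V) :
    fderiv ℝ (fun z => fderiv ℝ (fun z => (h z).re) z w) z w₁
      = (fderiv ℂ (fderiv ℂ h) z w₁ w).re := by
  have : (fun z => fderiv ℝ (fun z => (h z).re) z w) = fun z => (fderiv ℂ h z w).re :=
    funext fun z => fderiv_re_apply (hh z) w
  rw [this, fderiv_re_apply ((hh' z).clm_apply (differentiableAt_const w)),
    fderiv_clm_apply (hh' z) (differentiableAt_const w)]
  simp

-- For `b` the standard basis of `ℂᵐ`, the directions `∂/∂xᵢ` and `∂/∂yᵢ` of `zᵢ = xᵢ + i yᵢ`.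
def complexFrame (b : ι → V) : ι ⊕ ι → V := Sum.elim b fun i => I • b i

theorem gradSqAlong_complexFrame_re (hh : DifferentiableAt ℂ h z) (b : ι → V) :
    gradSqAlong (complexFrame b) (fun z => (h z).re) z = ∑ i, ‖fderiv ℂ h z (b i)‖ ^ 2 := by
  simp only [gradSqAlong, complexFrame, Fintype.sum_sum_type, Sum.elim_inl, Sum.elim_inr,
    fderiv_re_apply hh, map_smul, smul_eq_mul, I_mul_re, neg_sq, ← Finset.sum_add_distrib,
    Complex.sq_norm, normSq_apply]
  simp only [sq]

theorem laplacianAlong_complexFrame_re (hh : Differentiable ℂ h)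
    (hh' : Differentiable ℂ (fderiv ℂ h)) (b : ι → V) :
    laplacianAlong (complexFrame b) (fun z => (h z).re) z = 0 := by
  simp only [laplacianAlong, hessianAlong, complexFrame, Fintype.sum_sum_type, Sum.elim_inl,
    Sum.elim_inr, fderiv_fderiv_re_apply hh hh', map_smul, smul_apply, smul_eq_mul, I_mul_re,
    I_mul_im, add_neg_cancel, Finset.sum_const_zero, ← Finset.sum_add_distrib]

theorem oneLaplacianAlong_complexFrame_re (hh : Differentiable ℂ h)
    (hh' : Differentiable ℂ (fderiv ℂ h)) (b : ι → V) :
    oneLaplacianAlong (complexFrame b) (fun z => (h z).re) z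
      = -(∑ i, ∑ j, conj (fderiv ℂ (fun z' => fderiv ℂ h z' (b i)) z (b j))
          * fderiv ℂ h z (b i) * fderiv ℂ h z (b j)).re := by
  rw [oneLaplacianAlong, laplacianAlong_complexFrame_re hh hh', mul_zero, zero_sub, neg_inj,
    re_sum, Finset.sum_comm]
  simp only [hessianAlong, complexFrame, Fintype.sum_sum_type, Sum.elim_inl, Sum.elim_inr,
    fderiv_fderiv_re_apply hh hh', fderiv_re_apply (hh z), map_smul, smul_apply, smul_eq_mul,
    fderiv_clm_apply (hh' z) (differentiableAt_const _), fderiv_fun_const, Pi.zero_apply,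
    ContinuousLinearMap.comp_zero, zero_add, ContinuousLinearMap.flip_apply, re_sum,
    ← Finset.sum_add_distrib]
  -- each block `(xᵢ, yᵢ) × (xⱼ, yⱼ)` of the real sum is one term of the complex sum
  refine Finset.sum_congr rfl fun i _ => Finset.sum_congr rfl fun j _ => ?_
  simp only [mul_re, mul_im, conj_re, conj_im, I_re, I_im]
  ring

end Holomorphic

/-- For `f ξ = Re h(z) − F(t)`, `ξ = (z, t) ∈ ℂᵐ × ℝᵏ`, with `h` holomorphic and `F` of
class C², the 1-Laplacian of `f` in all `2m + k` real variables satisfies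
`−Δ₁ f = |∇_z h|² ΔF + Δ₁ F + Re Σᵢⱼ conj(h''_{zᵢzⱼ}) h'_{zᵢ} h'_{zⱼ}`. -/
theorem stmt_12 (m k : ℕ) (h : (Fin m → ℂ) → ℂ) (F : (Fin k → ℝ) → ℝ)
    (hdiff : Differentiable ℂ h) (hdiff2 : Differentiable ℂ (fun z => fderiv ℂ h z))
    (hF : ContDiff ℝ 2 F) :
    ∀ z : Fin m → ℂ, ∀ t : Fin k → ℝ,
      (let f : (Fin m → ℂ) × (Fin k → ℝ) → ℝ := fun p => (h p.1).re - F p.2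
       let e : (Fin m ⊕ Fin m) ⊕ Fin k → (Fin m → ℂ) × (Fin k → ℝ) :=
         Sum.elim (Sum.elim (fun i => (Pi.single i 1, 0)) (fun i => (Pi.single i I, 0)))
           (fun j => (0, Pi.single j 1))
       (-((∑ a : (Fin m ⊕ Fin m) ⊕ Fin k, (fderiv ℝ f (z, t) (e a)) ^ 2)
            * (∑ a : (Fin m ⊕ Fin m) ⊕ Fin k,
                fderiv ℝ (fun p => fderiv ℝ f p (e a)) (z, t) (e a))
          - ∑ a : (Fin m ⊕ Fin m) ⊕ Fin k, ∑ b : (Fin m ⊕ Fin m) ⊕ Fin k,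
              fderiv ℝ f (z, t) (e a) * fderiv ℝ f (z, t) (e b)
                * fderiv ℝ (fun p => fderiv ℝ f p (e b)) (z, t) (e a))
        = (∑ i : Fin m, ‖fderiv ℂ h z (Pi.single i 1)‖ ^ 2)
              * (∑ j : Fin k,
                  fderiv ℝ (fun t' => fderiv ℝ F t' (Pi.single j 1)) t (Pi.single j 1))
          + ((∑ j : Fin k, (fderiv ℝ F t (Pi.single j 1)) ^ 2)
                * (∑ j : Fin k,
                    fderiv ℝ (fun t' => fderiv ℝ F t' (Pi.single j 1)) t (Pi.single j 1))
              - ∑ i : Fin k, ∑ j : Fin k,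
                  fderiv ℝ F t (Pi.single i 1) * fderiv ℝ F t (Pi.single j 1)
                    * fderiv ℝ (fun t' => fderiv ℝ F t' (Pi.single j 1)) t (Pi.single i 1))
          + (∑ i : Fin m, ∑ j : Fin m,
              (starRingEnd ℂ)
                  (fderiv ℂ (fun z' => fderiv ℂ h z' (Pi.single i 1)) z (Pi.single j 1))
                * fderiv ℂ h z (Pi.single i 1) * fderiv ℂ h z (Pi.single j 1)).re)) := by
  intro z t
  have hframe : Sum.elim (Sum.elim (fun i => (Pi.single i 1, 0)) (fun i => (Pi.single i I, 0)))
      (fun j => (0, Pi.single j 1))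
      = prodFrame (complexFrame fun i : Fin m => Pi.single i (1 : ℂ))
          fun j : Fin k => Pi.single j (1 : ℝ) := by
    ext ((i | i) | j) : 1 <;>
      simp only [prodFrame, complexFrame, Sum.elim_inl, Sum.elim_inr, ← Pi.single_smul',
        smul_eq_mul, mul_one]
  have hu : Differentiable ℝ fun z => (h z).re :=
    reCLM.differentiable.comp (hdiff.restrictScalars ℝ)
  have hu' := differentiable_fderiv_re hdiff hdiff2
  have hF' := (hF.fderiv_right (m := 1) le_rfl).differentiable one_ne_zero
  rw [hframe]
  change -oneLaplacianAlong _ (fun p => (h p.1).re - F p.2) (z, t) = _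
  rw [oneLaplacianAlong_sub_prod _ _ hu (hF.differentiable two_ne_zero) (hu' z) (hF' t),
    gradSqAlong_complexFrame_re (hdiff z), laplacianAlong_complexFrame_re hdiff hdiff2,
    oneLaplacianAlong_complexFrame_re hdiff hdiff2]
  simp only [oneLaplacianAlong, gradSqAlong, laplacianAlong, hessianAlong]
  ring
end

section
/- Let h be holomorphic on ℂᵐ satisfying Σᵢⱼ conj(∂²h/∂zᵢ∂zⱼ)(∂h/∂zᵢ)(∂h/∂zⱼ) = μ·h with μ real-valued. Then the function f = Re h : ℝ²ᵐ → ℝ satisfies the congruence Δ₁f(ξ) = 0 whenever f(ξ) = 0, i.e., Re h(z) = 0 implies Δ₁(Re h)(z) = 0, where Δ₁f = |Df|²Δf − Σᵢⱼ f_{ξᵢ}f_{ξⱼ}f_{ξᵢξⱼ} with respect to the 2m real coordinates. -/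
open Complex

lemma stmt_13_aux {m : ℕ} (g : Fin m → ℂ) (A : Fin m → Fin m → ℂ) (c : ℝ) (w : ℂ)
    (D : Fin m ⊕ Fin m → ℂ) (B : Fin m ⊕ Fin m → Fin m ⊕ Fin m → ℂ)
    (hD1 : ∀ i, D (Sum.inl i) = g i) (hD2 : ∀ i, D (Sum.inr i) = I * g i)
    (hB11 : ∀ i j, B (Sum.inl i) (Sum.inl j) = A i j)
    (hB12 : ∀ i j, B (Sum.inl i) (Sum.inr j) = I * A i j)
    (hB21 : ∀ i j, B (Sum.inr i) (Sum.inl j) = I * A i j)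
    (hB22 : ∀ i j, B (Sum.inr i) (Sum.inr j) = I * (I * A i j))
    (hw : w.re = 0)
    (hμc : ∑ i : Fin m, ∑ j : Fin m, (starRingEnd ℂ) (A j i) * g i * g j = (c : ℂ) * w) :
    (∑ a : Fin m ⊕ Fin m, (D a).re ^ 2) * (∑ a : Fin m ⊕ Fin m, (B a a).re)
      - ∑ a : Fin m ⊕ Fin m, ∑ b : Fin m ⊕ Fin m,
          (D a).re * (D b).re * (B a b).re = 0 := by
  simp only [Fintype.sum_sum_type, hD1, hD2, hB11, hB12, hB21, hB22]
  have hlap : ((∑ i : Fin m, (A i i).re) + ∑ i : Fin m, (I * (I * A i i)).re) = 0 := by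
    rw [← Finset.sum_add_distrib]
    refine Finset.sum_eq_zero fun i _ => ?_
    rw [← mul_assoc, I_mul_I]
    simp
  rw [hlap, mul_zero, zero_sub, neg_eq_zero]
  have key : ∀ i j : Fin m,
      (g i).re * (g j).re * (A i j).re
      + (g i).re * (I * g j).re * (I * A i j).re
      + ((I * g i).re * (g j).re * (I * A i j).re
      + (I * g i).re * (I * g j).re * (I * (I * A i j)).re)
      = ((starRingEnd ℂ) (g i) * (starRingEnd ℂ) (g j) * A i j).re := by
    intro i j
    simp only [Complex.mul_re, Complex.mul_im, Complex.I_re, Complex.I_im,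
      Complex.conj_re, Complex.conj_im]
    ring
  have merge : (∑ i : Fin m, (∑ j : Fin m, (g i).re * (g j).re * (A i j).re
        + ∑ j : Fin m, (g i).re * (I * g j).re * (I * A i j).re))
      + ∑ i : Fin m, (∑ j : Fin m, (I * g i).re * (g j).re * (I * A i j).re
        + ∑ j : Fin m, (I * g i).re * (I * g j).re * (I * (I * A i j)).re)
      = ∑ i : Fin m, ∑ j : Fin m,
          ((starRingEnd ℂ) (g i) * (starRingEnd ℂ) (g j) * A i j).re := by
    rw [← Finset.sum_add_distrib]
    refine Finset.sum_congr rfl fun i _ => ?_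
    simp only [← Finset.sum_add_distrib]
    refine Finset.sum_congr rfl fun j _ => ?_
    rw [← key i j]
  rw [merge]
  have conjμ : ∑ i : Fin m, ∑ j : Fin m,
      (starRingEnd ℂ) (g i) * (starRingEnd ℂ) (g j) * A i j
      = (c : ℂ) * (starRingEnd ℂ) w := by
    have h2 := congrArg (starRingEnd ℂ) hμc
    simp only [map_sum, map_mul, RingHomCompTriple.comp_apply, RingHom.id_apply,
      Complex.conj_conj, Complex.conj_ofReal] at h2
    rw [← h2, Finset.sum_comm]
    refine Finset.sum_congr rfl fun i _ => Finset.sum_congr rfl fun j _ => ?_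
    ring
  calc ∑ i : Fin m, ∑ j : Fin m,
        ((starRingEnd ℂ) (g i) * (starRingEnd ℂ) (g j) * A i j).re
      = (∑ i : Fin m, ∑ j : Fin m,
          (starRingEnd ℂ) (g i) * (starRingEnd ℂ) (g j) * A i j).re := by
        rw [Complex.re_sum]
        exact Finset.sum_congr rfl fun i _ => (Complex.re_sum _ _).symm
    _ = 0 := by
        rw [conjμ]
        simp [Complex.mul_re, Complex.conj_re, Complex.conj_im, hw]

/-- If `h` is holomorphic on `ℂᵐ` with `Σᵢⱼ conj(h''_{zᵢzⱼ}) h'_{zᵢ} h'_{zⱼ} = μ h`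
for a real-valued `μ`, then `f = Re h : ℝ²ᵐ → ℝ` satisfies `Δ₁ f ≡ 0 (mod f)`:
`Re h(z) = 0` implies `Δ₁ (Re h)(z) = 0`, where `Δ₁` is taken in the `2m` real
coordinates `x₁, y₁, …, xₘ, yₘ`. -/
theorem stmt_13 (m : ℕ) (h : (Fin m → ℂ) → ℂ)
    (hdiff : Differentiable ℂ h) (hdiff2 : Differentiable ℂ (fun z => fderiv ℂ h z))
    (μ : (Fin m → ℂ) → ℝ)
    (hμ : ∀ z, ∑ i : Fin m, ∑ j : Fin m,
        (starRingEnd ℂ) (fderiv ℂ (fun z' => fderiv ℂ h z' (Pi.single i 1)) z (Pi.single j 1))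
          * fderiv ℂ h z (Pi.single i 1) * fderiv ℂ h z (Pi.single j 1)
        = (μ z : ℂ) * h z) :
    ∀ z : Fin m → ℂ, (h z).re = 0 →
      (let f : (Fin m → ℂ) → ℝ := fun w => (h w).re
       let e : Fin m ⊕ Fin m → Fin m → ℂ :=
         Sum.elim (fun i => Pi.single i 1) (fun i => Pi.single i I)
       ((∑ a : Fin m ⊕ Fin m, (fderiv ℝ f z (e a)) ^ 2)
            * (∑ a : Fin m ⊕ Fin m, fderiv ℝ (fun w => fderiv ℝ f w (e a)) z (e a))
          - ∑ a : Fin m ⊕ Fin m, ∑ b : Fin m ⊕ Fin m,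
              fderiv ℝ f z (e a) * fderiv ℝ f z (e b)
                * fderiv ℝ (fun w => fderiv ℝ f w (e b)) z (e a)
        = 0)) := by
  intro z hz
  intro f e
  have lemA : ∀ v : Fin m → ℂ, fderiv ℝ f z v = (fderiv ℂ h z v).re := by
    intro v
    have H : HasFDerivAt (fun w => (h w).re)
        (Complex.reCLM.comp ((fderiv ℂ h z).restrictScalars ℝ)) z :=
      Complex.reCLM.hasFDerivAt.comp z ((hdiff z).hasFDerivAt.restrictScalars ℝ)
    show fderiv ℝ (fun w => (h w).re) z v = _
    rw [H.fderiv]; rfl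
  have lemC : ∀ u v : Fin m → ℂ,
      fderiv ℝ (fun w => fderiv ℝ f w v) z u
        = (fderiv ℂ (fun w => fderiv ℂ h w) z u v).re := by
    intro u v
    have hA : (fun w => fderiv ℝ f w v) = fun w => (fderiv ℂ h w v).re := by
      funext w
      have H : HasFDerivAt (fun w' => (h w').re)
          (Complex.reCLM.comp ((fderiv ℂ h w).restrictScalars ℝ)) w :=
        Complex.reCLM.hasFDerivAt.comp w ((hdiff w).hasFDerivAt.restrictScalars ℝ)
      show fderiv ℝ (fun w' => (h w').re) w v = _
      rw [H.fderiv]; rfl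
    rw [hA]
    have H2 : HasFDerivAt (fun w => (fderiv ℂ h w v).re)
        ((Complex.reCLM.comp ((ContinuousLinearMap.apply ℂ ℂ v).restrictScalars ℝ)).comp
          ((fderiv ℂ (fun w => fderiv ℂ h w) z).restrictScalars ℝ)) z :=
      (Complex.reCLM.comp
        ((ContinuousLinearMap.apply ℂ ℂ v).restrictScalars ℝ)).hasFDerivAt.comp z
        ((hdiff2 z).hasFDerivAt.restrictScalars ℝ)
    rw [H2.fderiv]; rfl
  have lemB : ∀ u v : Fin m → ℂ,
      fderiv ℂ (fun w => fderiv ℂ h w v) z u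
        = fderiv ℂ (fun w => fderiv ℂ h w) z u v := by
    intro u v
    have H : HasFDerivAt (fun w => fderiv ℂ h w v)
        ((ContinuousLinearMap.apply ℂ ℂ v).comp (fderiv ℂ (fun w => fderiv ℂ h w) z)) z :=
      (ContinuousLinearMap.apply ℂ ℂ v).hasFDerivAt.comp z (hdiff2 z).hasFDerivAt
    rw [H.fderiv]; rfl
  have hsingle : ∀ i : Fin m, (Pi.single i I : Fin m → ℂ) = I • (Pi.single i 1 : Fin m → ℂ) := by
    intro i; funext k
    by_cases hk : k = i
    · subst hk; simp
    · simp [Pi.single_eq_of_ne hk]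
  set g : Fin m → ℂ := fun i => fderiv ℂ h z (Pi.single i 1) with hg
  set A : Fin m → Fin m → ℂ :=
    fun i j => fderiv ℂ (fun w => fderiv ℂ h w) z (Pi.single i 1) (Pi.single j 1) with hA
  have hμ' : ∑ i : Fin m, ∑ j : Fin m,
      (starRingEnd ℂ) (A j i) * g i * g j = ((μ z : ℝ) : ℂ) * h z := by
    rw [← hμ z]
    refine Finset.sum_congr rfl fun i _ => Finset.sum_congr rfl fun j _ => ?_
    rw [lemB]
  simp only [lemA, lemC]
  refine stmt_13_aux g A (μ z) (h z)
    (fun a => fderiv ℂ h z (e a))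
    (fun a b => fderiv ℂ (fun w => fderiv ℂ h w) z (e a) (e b))
    (fun i => rfl) ?_ (fun i j => rfl) ?_ ?_ ?_ hz hμ'
  · intro i
    show fderiv ℂ h z (Pi.single i I) = _
    rw [hsingle, map_smul, smul_eq_mul, hg]
  · intro i j
    show fderiv ℂ (fun w => fderiv ℂ h w) z (Pi.single i 1) (Pi.single j I) = _
    rw [hsingle j, map_smul, smul_eq_mul, hA]
  · intro i j
    show fderiv ℂ (fun w => fderiv ℂ h w) z (Pi.single i I) (Pi.single j 1) = _
    rw [hsingle i, map_smul, ContinuousLinearMap.smul_apply, smul_eq_mul, hA]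
  · intro i j
    show fderiv ℂ (fun w => fderiv ℂ h w) z (Pi.single i I) (Pi.single j I) = _
    rw [hsingle i, hsingle j, map_smul, map_smul, ContinuousLinearMap.smul_apply,
      smul_eq_mul, smul_eq_mul, hA]
end

section
/- Let h be holomorphic on a connected open set Ω ⊆ ℂ with h, h' nonvanishing, and suppose h(z)h''(z) = c·h'(z)² on Ω for some real constant c ≠ 1. Then there exist constants a, b ∈ ℂ with h(z)^{1−c} = az + b on Ω (for a suitable branch); if c = 1 then h(z) = A e^{Bz} for some constants A, B ∈ ℂ. -/
/-!
The logarithmic derivative `ℓ = h'/h` satisfies the Riccati equation `ℓ' = (c - 1) ℓ²`, and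
with `L' = ℓ` this makes `ℓ · exp ((1 - c) L)` a first integral, equal to a constant `B`.
For `c ≠ 1` the function `exp ((1 - c) L)` then has constant derivative `(1 - c) B`, so it is
affine; for `c = 1` the first integral is `ℓ` itself, so `L` is affine and `h = exp L` is an
exponential.
-/

open Complex

section Constancy

variable {𝕜 : Type*} [RCLike 𝕜] {s : Set 𝕜} {f : 𝕜 → 𝕜}

theorem IsOpen.exists_eq_const_of_hasDerivAt_zero (hs : IsOpen s) (hs' : IsPreconnected s)
    (hf : ∀ x ∈ s, HasDerivAt f 0 x) : ∃ b, ∀ x ∈ s, f x = b :=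
  hs.exists_is_const_of_deriv_eq_zero hs'
    (fun x hx => (hf x hx).differentiableAt.differentiableWithinAt) fun x hx => (hf x hx).deriv

theorem IsOpen.exists_eq_mul_add_of_hasDerivAt (hs : IsOpen s) (hs' : IsPreconnected s)
    {a : 𝕜} (hf : ∀ x ∈ s, HasDerivAt f a x) : ∃ b, ∀ x ∈ s, f x = a * x + b := by
  have hg : ∀ x ∈ s, HasDerivAt (fun x => f x - a * x) 0 x := fun x hx =>
    ((hf x hx).sub ((hasDerivAt_id x).const_mul a)).congr_deriv (by ring)
  obtain ⟨b, hb⟩ := hs.exists_eq_const_of_hasDerivAt_zero hs' hg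
  exact ⟨b, fun x hx => by rw [← hb x hx]; ring⟩

end Constancy

theorem hasDerivAt_logDeriv_of_mul_deriv_deriv_eq {𝕜 : Type*} [NontriviallyNormedField 𝕜]
    {f : 𝕜 → 𝕜} {x c : 𝕜} (hf : DifferentiableAt 𝕜 f x)
    (hf' : DifferentiableAt 𝕜 (deriv f) x) (hx : f x ≠ 0)
    (hode : f x * deriv (deriv f) x = c * deriv f x ^ 2) :
    HasDerivAt (logDeriv f) ((c - 1) * logDeriv f x ^ 2) x := by
  refine (hf'.hasDerivAt.div hf.hasDerivAt hx).congr_deriv ?_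
  rw [logDeriv_apply]
  field_simp
  linear_combination hode

theorem hasDerivAt_of_cexp_eqOn {s : Set ℂ} {L h : ℂ → ℂ} {z : ℂ} (hs : IsOpen s)
    (hL : DifferentiableOn ℂ L s) (hLh : ∀ w ∈ s, exp (L w) = h w) (hz : z ∈ s) :
    HasDerivAt L (logDeriv h z) z := by
  have hLz : DifferentiableAt ℂ L z := hL.differentiableAt (hs.mem_nhds hz)
  have hh : exp ∘ L =ᶠ[nhds z] h := Filter.eventually_of_mem (hs.mem_nhds hz) hLh
  rw [← (logDeriv_congr_nhds hh).eq_of_nhds, logDeriv_comp differentiableAt_exp hLz, logDeriv_exp,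
    Pi.one_apply, one_mul]
  exact hLz.hasDerivAt

theorem hasDerivAt_mul_cexp_of_riccati {L ℓ : ℂ → ℂ} {k z : ℂ} (hL : HasDerivAt L (ℓ z) z)
    (hℓ : HasDerivAt ℓ (-k * ℓ z ^ 2) z) :
    HasDerivAt (fun w => ℓ w * exp (k * L w)) 0 z := by
  refine (hℓ.mul (hL.const_mul k).cexp).congr_deriv ?_
  ring

theorem stmt_17_general (Ω : Set ℂ) (hΩ : IsOpen Ω) (hconn : IsPreconnected Ω)
    (h : ℂ → ℂ) (hdiff : ∀ z ∈ Ω, DifferentiableAt ℂ h z)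
    (hdiff2 : ∀ z ∈ Ω, DifferentiableAt ℂ (deriv h) z)
    (hne : ∀ z ∈ Ω, h z ≠ 0)
    (L : ℂ → ℂ) (hL : DifferentiableOn ℂ L Ω) (hLh : ∀ z ∈ Ω, Complex.exp (L z) = h z)
    (c : ℝ) (hode : ∀ z ∈ Ω, h z * deriv (deriv h) z = (c : ℂ) * (deriv h z) ^ 2) :
    (c ≠ 1 → ∃ a b : ℂ, ∀ z ∈ Ω, Complex.exp ((1 - (c : ℂ)) * L z) = a * z + b) ∧
    (c = 1 → ∃ A B : ℂ, ∀ z ∈ Ω, h z = A * Complex.exp (B * z)) := by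
  have hLd : ∀ z ∈ Ω, HasDerivAt L (logDeriv h z) z := fun z hz =>
    hasDerivAt_of_cexp_eqOn hΩ hL hLh hz
  obtain ⟨B, hB⟩ := hΩ.exists_eq_const_of_hasDerivAt_zero hconn fun z hz =>
    hasDerivAt_mul_cexp_of_riccati (k := 1 - c) (hLd z hz) <| by
      refine (hasDerivAt_logDeriv_of_mul_deriv_deriv_eq (hdiff z hz) (hdiff2 z hz) (hne z hz)
        (hode z hz)).congr_deriv ?_
      ring
  refine ⟨fun _ => ?_, fun hc => ?_⟩
  · obtain ⟨b, hb⟩ := hΩ.exists_eq_mul_add_of_hasDerivAt hconn (a := (1 - c) * B) fun z hz => by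
      refine ((hLd z hz).const_mul (1 - (c : ℂ))).cexp.congr_deriv ?_
      rw [← hB z hz]
      ring
    exact ⟨_, b, hb⟩
  · subst hc
    obtain ⟨b, hb⟩ := hΩ.exists_eq_mul_add_of_hasDerivAt hconn (f := L) (a := B) fun z hz => by
      simpa [← hB z hz] using hLd z hz
    exact ⟨exp b, B, fun z hz => by rw [← hLh z hz, hb z hz, exp_add, mul_comm]⟩

/-- ODE step classifying ℝ-holomorphic functions of one variable: let `h` be holomorphic
on a connected open `Ω ⊆ ℂ` with `h, h'` nonvanishing, admitting a holomorphic logarithm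
`L` (Ω simply connected), and suppose `h z * h'' z = c * (h' z)²` on `Ω` for a real
constant `c`. If `c ≠ 1` there are `a, b ∈ ℂ` with `h^{1−c} = a z + b` on `Ω` (for the
branch determined by `L`); if `c = 1` then `h z = A e^{B z}` for some `A, B ∈ ℂ`. -/
theorem stmt_17 (Ω : Set ℂ) (hΩ : IsOpen Ω) (hconn : IsPreconnected Ω)
    (h : ℂ → ℂ) (hdiff : ∀ z ∈ Ω, DifferentiableAt ℂ h z)
    (hdiff2 : ∀ z ∈ Ω, DifferentiableAt ℂ (deriv h) z)
    (hne : ∀ z ∈ Ω, h z ≠ 0) (hne' : ∀ z ∈ Ω, deriv h z ≠ 0)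
    (L : ℂ → ℂ) (hL : DifferentiableOn ℂ L Ω) (hLh : ∀ z ∈ Ω, Complex.exp (L z) = h z)
    (c : ℝ) (hode : ∀ z ∈ Ω, h z * deriv (deriv h) z = (c : ℂ) * (deriv h z) ^ 2) :
    (c ≠ 1 → ∃ a b : ℂ, ∀ z ∈ Ω, Complex.exp ((1 - (c : ℂ)) * L z) = a * z + b) ∧
    (c = 1 → ∃ A B : ℂ, ∀ z ∈ Ω, h z = A * Complex.exp (B * z)) :=
  stmt_17_general Ω hΩ hconn h hdiff hdiff2 hne L hL hLh c hode
end
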